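/- For every graph G, the graph q(G) is (diamond, 2P_3)-free, where q(G) is defined as follows: its vertex set is V(G) together with the set B(G) of all ordered pairs (v,w) with vw an edge of G; any two distinct vertices of V(G) are adjacent in q(G); for each edge vw of G, the pairs of vertices {v,(v,w)}, {(v,w),(w,v)} and {(w,v),w} are adjacent in q(G); and q(G) has no other edges. -/

import Mathlib

open SimpleGraph

/-- The graph `2P_1 + P_3` on five vertices: vertices `0` and `1` are isolated and
`2 - 3 - 4` is a path on three vertices. -/
def twoP1PlusP3 : SimpleGraph (Fin 5) :=
  SimpleGraph.fromRel (fun a b => (a = 2 ∧ b = 3) ∨ (a = 3 ∧ b = 4))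

/-- The complement of `2P_1 + P_3`, i.e. `K_5` minus the two edges of a `P_3`. -/
def co2P1P3 : SimpleGraph (Fin 5) := twoP1PlusP3ᶜ

/-- The graph `P_1 + P_3`: an isolated vertex together with a path on three vertices. -/
def P1PlusP3 : SimpleGraph (Fin 4) :=
  SimpleGraph.fromRel (fun a b => (a = 1 ∧ b = 2) ∨ (a = 2 ∧ b = 3))

/-- The paw: the complement of `P_1 + P_3` (a triangle with a pendant vertex). -/
def paw : SimpleGraph (Fin 4) := P1PlusP3ᶜ

/-- The graph `P_2 + P_3`: disjoint union of a path on two vertices and a path on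
three vertices. -/
def P2PlusP3 : SimpleGraph (Fin 5) :=
  SimpleGraph.fromRel (fun a b => (a = 0 ∧ b = 1) ∨ (a = 2 ∧ b = 3) ∨ (a = 3 ∧ b = 4))

/-- The graph `2P_1 + P_2`. -/
def twoP1PlusP2 : SimpleGraph (Fin 4) :=
  SimpleGraph.fromRel (fun a b => a = 2 ∧ b = 3)

/-- The diamond: the complement of `2P_1 + P_2`, i.e. `K_4` minus an edge. -/
def diamond : SimpleGraph (Fin 4) := twoP1PlusP2ᶜ

/-- The graph `2P_3`: disjoint union of two paths on three vertices. -/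
def twoP3 : SimpleGraph (Fin 6) :=
  SimpleGraph.fromRel
    (fun a b => (a = 0 ∧ b = 1) ∨ (a = 1 ∧ b = 2) ∨ (a = 3 ∧ b = 4) ∨ (a = 4 ∧ b = 5))

/-- The graph `P_1 + P_4`. -/
def P1PlusP4 : SimpleGraph (Fin 5) :=
  SimpleGraph.fromRel (fun a b => (a = 1 ∧ b = 2) ∨ (a = 2 ∧ b = 3) ∨ (a = 3 ∧ b = 4))

/-- The gem: the complement of `P_1 + P_4`. -/
def gem : SimpleGraph (Fin 5) := P1PlusP4ᶜ

/-- The graph `P_1 + 2P_2`. -/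
def P1Plus2P2 : SimpleGraph (Fin 5) :=
  SimpleGraph.fromRel (fun a b => (a = 1 ∧ b = 2) ∨ (a = 3 ∧ b = 4))

/-- `G` is `H`-free: no induced subgraph of `G` is isomorphic to `H`; equivalently,
there is no graph embedding (induced-subgraph embedding) of `H` into `G`. -/
def Free {W V : Type*} (H : SimpleGraph W) (G : SimpleGraph V) : Prop :=
  IsEmpty (H ↪g G)

/-- A graph is complete multipartite if its vertex set can be partitioned into
independent sets (the equivalence classes of some equivalence relation) such that
two vertices are adjacent if and only if they lie in different parts. -/
def IsCompleteMultipartite {V : Type*} (G : SimpleGraph V) : Prop :=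
  ∃ s : Setoid V, ∀ v w : V, G.Adj v w ↔ ¬ s.r v w

/-- The graph `q(G)`: its vertices are the vertices of `G` together with all ordered
pairs `(v, w)` with `vw` an edge of `G`; the vertices of `G` are pairwise adjacent;
for each edge `vw` of `G` the vertex `v` is adjacent to `(v, w)`, the vertex `(v, w)`
is adjacent to `(w, v)`, and `(w, v)` is adjacent to `w`; there are no other edges. -/
def qGraph {V : Type*} (G : SimpleGraph V) :
    SimpleGraph (V ⊕ {p : V × V // G.Adj p.1 p.2}) :=
  SimpleGraph.fromRel (fun a b =>
    match a, b with
    | Sum.inl _, Sum.inl _ => True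
    | Sum.inl v, Sum.inr e => v = e.1.1
    | Sum.inr _, Sum.inl _ => False
    | Sum.inr e, Sum.inr f => e.1.1 = f.1.2 ∧ e.1.2 = f.1.1)

open Sum in
lemma q_adj_inl_inl {V : Type*} (G : SimpleGraph V) (v w : V) :
    (qGraph G).Adj (inl v) (inl w) ↔ v ≠ w := by
  simp [qGraph, SimpleGraph.fromRel_adj]

open Sum in
lemma q_adj_inl_inr {V : Type*} (G : SimpleGraph V) (v : V)
    (e : {p : V × V // G.Adj p.1 p.2}) :
    (qGraph G).Adj (inl v) (inr e) ↔ v = e.1.1 := by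
  simp [qGraph, SimpleGraph.fromRel_adj]

open Sum in
lemma q_adj_inr_inr {V : Type*} (G : SimpleGraph V)
    (e f : {p : V × V // G.Adj p.1 p.2}) :
    (qGraph G).Adj (inr e) (inr f) ↔ e.1.1 = f.1.2 ∧ e.1.2 = f.1.1 := by
  simp only [qGraph, SimpleGraph.fromRel_adj, ne_eq]
  constructor
  · rintro ⟨-, h | h⟩
    · exact h
    · exact ⟨h.2.symm, h.1.symm⟩
  · rintro ⟨h1, h2⟩
    refine ⟨fun hef => ?_, Or.inl ⟨h1, h2⟩⟩
    injection hef with hef'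
    subst hef'
    exact G.ne_of_adj e.2 h1

open Sum in
/-- No vertex of the form `inr e` lies in a triangle of `qGraph G`. -/
lemma q_no_tri {V : Type*} (G : SimpleGraph V) (e : {p : V × V // G.Adj p.1 p.2})
    (x y : V ⊕ {p : V × V // G.Adj p.1 p.2})
    (hx : (qGraph G).Adj x (inr e)) (hy : (qGraph G).Adj y (inr e))
    (hxy : (qGraph G).Adj x y) : False := by
  cases x with
  | inl v =>
    rw [q_adj_inl_inr] at hx
    cases y with
    | inl w =>
      rw [q_adj_inl_inr] at hy
      rw [q_adj_inl_inl] at hxy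
      exact hxy (hx.trans hy.symm)
    | inr g =>
      rw [q_adj_inr_inr] at hy
      rw [q_adj_inl_inr] at hxy
      exact G.ne_of_adj e.2 (hx.symm.trans (hxy.trans hy.1))
  | inr f =>
    rw [q_adj_inr_inr] at hx
    cases y with
    | inl w =>
      rw [q_adj_inl_inr] at hy
      rw [(qGraph G).adj_comm, q_adj_inl_inr] at hxy
      exact G.ne_of_adj e.2 (hy.symm.trans (hxy.trans hx.1))
    | inr g =>
      rw [q_adj_inr_inr] at hy
      rw [q_adj_inr_inr] at hxy
      exact G.ne_of_adj e.2 ((hx.2.symm.trans hxy.2).trans hy.1)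

open Sum in
/-- A path on three `inr` vertices is impossible without repeating a vertex. -/
lemma q_path_inr {V : Type*} (G : SimpleGraph V)
    (e f g : {p : V × V // G.Adj p.1 p.2})
    (h1 : (qGraph G).Adj (inr e) (inr f)) (h2 : (qGraph G).Adj (inr g) (inr f)) :
    e = g := by
  rw [q_adj_inr_inr] at h1 h2
  exact Subtype.ext (Prod.ext (h1.1.trans h2.1.symm) (h1.2.trans h2.2.symm))

instance : DecidableRel twoP1PlusP2.Adj := fun a b => by
  unfold twoP1PlusP2; rw [SimpleGraph.fromRel_adj]; infer_instance

instance : DecidableRel diamond.Adj := fun a b => by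
  unfold diamond; infer_instance

instance : DecidableRel twoP3.Adj := fun a b => by
  unfold twoP3; rw [SimpleGraph.fromRel_adj]; infer_instance

theorem statement15 {V : Type*} [Fintype V] (G : SimpleGraph V) :
    _root_.Free diamond (qGraph G) ∧ _root_.Free twoP3 (qGraph G) := by
  constructor
  · constructor
    intro f
    have h01 : (qGraph G).Adj (f 0) (f 1) := f.map_rel_iff.mpr (by decide)
    have h02 : (qGraph G).Adj (f 0) (f 2) := f.map_rel_iff.mpr (by decide)
    have h12 : (qGraph G).Adj (f 1) (f 2) := f.map_rel_iff.mpr (by decide)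
    have h03 : (qGraph G).Adj (f 0) (f 3) := f.map_rel_iff.mpr (by decide)
    have h13 : (qGraph G).Adj (f 1) (f 3) := f.map_rel_iff.mpr (by decide)
    -- f 2 and f 3 must be `inl`
    obtain ⟨a2, ha2⟩ : ∃ a, f 2 = Sum.inl a := by
      cases hf : f 2 with
      | inl a => exact ⟨a, rfl⟩
      | inr e => exact (q_no_tri G e (f 0) (f 1) (hf ▸ h02) (hf ▸ h12) h01).elim
    obtain ⟨a3, ha3⟩ : ∃ a, f 3 = Sum.inl a := by
      cases hf : f 3 with
      | inl a => exact ⟨a, rfl⟩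
      | inr e => exact (q_no_tri G e (f 0) (f 1) (hf ▸ h03) (hf ▸ h13) h01).elim
    have hne : a2 ≠ a3 := by
      intro h
      have : f 2 = f 3 := by rw [ha2, ha3, h]
      exact absurd (f.injective this) (by decide)
    have : (qGraph G).Adj (f 2) (f 3) := by
      rw [ha2, ha3, q_adj_inl_inl]; exact hne
    exact absurd (f.map_rel_iff.mp this) (by decide)
  · constructor
    intro f
    have h01 : (qGraph G).Adj (f 0) (f 1) := f.map_rel_iff.mpr (by decide)
    have h12 : (qGraph G).Adj (f 1) (f 2) := f.map_rel_iff.mpr (by decide)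
    have h34 : (qGraph G).Adj (f 3) (f 4) := f.map_rel_iff.mpr (by decide)
    have h45 : (qGraph G).Adj (f 4) (f 5) := f.map_rel_iff.mpr (by decide)
    -- any `inl` vertex in the image of {0,1,2} and any in {3,4,5} give a contradiction
    have cross : ∀ i j : Fin 6, i ∈ ({0,1,2} : Set (Fin 6)) → j ∈ ({3,4,5} : Set (Fin 6)) →
        ∀ a b : V, f i = Sum.inl a → f j = Sum.inl b → False := by
      intro i j hi hj a b hfi hfj
      by_cases hab : a = b
      · have : f i = f j := by rw [hfi, hfj, hab]
        have := f.injective this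
        subst this
        revert hi hj
        simp only [Set.mem_insert_iff, Set.mem_singleton_iff]
        rintro (rfl | rfl | rfl) (h | h | h) <;> exact absurd h (by decide)
      · have hadj : (qGraph G).Adj (f i) (f j) := by
          rw [hfi, hfj, q_adj_inl_inl]; exact hab
        have := f.map_rel_iff.mp hadj
        revert hi hj
        simp only [Set.mem_insert_iff, Set.mem_singleton_iff]
        rintro (rfl | rfl | rfl) (rfl | rfl | rfl) <;> exact absurd this (by decide)
    -- hence one of the two triples maps entirely to `inr`
    have key : (∀ i : Fin 6, i ∈ ({0,1,2} : Set (Fin 6)) → ∃ e, f i = Sum.inr e) ∨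
        (∀ j : Fin 6, j ∈ ({3,4,5} : Set (Fin 6)) → ∃ e, f j = Sum.inr e) := by
      by_contra h
      push_neg at h
      obtain ⟨⟨i, hi, hi2⟩, ⟨j, hj, hj2⟩⟩ := h
      obtain ⟨a, ha⟩ : ∃ a, f i = Sum.inl a := by
        cases hfi : f i with
        | inl a => exact ⟨a, rfl⟩
        | inr e => exact absurd hfi (hi2 e)
      obtain ⟨b, hb⟩ : ∃ b, f j = Sum.inl b := by
        cases hfj : f j with
        | inl b => exact ⟨b, rfl⟩
        | inr e => exact absurd hfj (hj2 e)
      exact cross i j hi hj a b ha hb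
    cases key with
    | inl h =>
      obtain ⟨e, he⟩ := h 0 (by simp)
      obtain ⟨g, hg⟩ := h 1 (by simp)
      obtain ⟨k, hk⟩ := h 2 (by simp)
      have heq : e = k := q_path_inr G e g k (he ▸ hg ▸ h01) (hk ▸ hg ▸ h12.symm)
      have : f 0 = f 2 := by rw [he, hk, heq]
      exact absurd (f.injective this) (by decide)
    | inr h =>
      obtain ⟨e, he⟩ := h 3 (by simp)
      obtain ⟨g, hg⟩ := h 4 (by simp)
      obtain ⟨k, hk⟩ := h 5 (by simp)
      have heq : e = k := q_path_inr G e g k (he ▸ hg ▸ h34) (hk ▸ hg ▸ h45.symm)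
      have : f 3 = f 5 := by rw [he, hk, heq]
      exact absurd (f.injective this) (by decide)
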